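/- (Plackett's identity.) For all x, y ∈ ℝ and all ρ ∈ (−1,1), the function ρ ↦ Φ₂(x,y;ρ) is differentiable in ρ and its derivative equals the bivariate normal density: d/dρ Φ₂(x,y;ρ) = φ₂(x,y;ρ). -/

import Mathlib

/-!
Conditioning on the first coordinate, `φ₂(s, t; ρ) = φ(s) · φ((t - ρ s) / σ) / σ` with
`σ = √(1 - ρ²)`, hence `Φ₂(x, y; ρ) = ∫_{s < x} φ(s) Φ((y - ρ s) / σ) ds`. Differentiating under
the integral sign, the `ρ`-derivative of this integrand is exactly the `s`-derivative of
`φ₂(s, y; ρ)`, so the integral telescopes to `φ₂(x, y; ρ)`, since `φ₂(s, y; ρ) → 0` as `s → -∞`.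
For `ρ` in a compact subinterval of `(-1, 1)` these derivatives are dominated by a multiple of
`(|y| + |s|) φ(s)`.
-/

open MeasureTheory Real Set

/-- Standard normal density φ. -/
noncomputable def stdPdf (x : ℝ) : ℝ :=
  (1 / Real.sqrt (2 * Real.pi)) * Real.exp (-x ^ 2 / 2)

/-- Standard normal distribution function Φ. -/
noncomputable def stdCdf (h : ℝ) : ℝ := ∫ x in Set.Iio h, stdPdf x

/-- Inverse Φ⁻¹ of the standard normal distribution function (on (0,1)). -/
noncomputable def stdQuantile : ℝ → ℝ := Function.invFun stdCdf

/-- Bivariate standard normal density φ₂ with correlation ρ. -/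
noncomputable def binPdf (x y ρ : ℝ) : ℝ :=
  (1 / (2 * Real.pi * Real.sqrt (1 - ρ ^ 2))) *
    Real.exp (-(x ^ 2 - 2 * ρ * x * y + y ^ 2) / (2 * (1 - ρ ^ 2)))

/-- Bivariate standard normal distribution function Φ₂. -/
noncomputable def binCdf (h k ρ : ℝ) : ℝ :=
  ∫ x in Set.Iio h, ∫ y in Set.Iio k, binPdf x y ρ

/-- The bivariate normal copula C(u,v;ρ) = Φ₂(Φ⁻¹(u),Φ⁻¹(v);ρ). -/
noncomputable def normCopula (u v ρ : ℝ) : ℝ :=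
  binCdf (stdQuantile u) (stdQuantile v) ρ

/-- g(u;ρ) = Φ(√((1−ρ)/(1+ρ))·Φ⁻¹(u)). -/
noncomputable def gFun (u ρ : ℝ) : ℝ :=
  stdCdf (Real.sqrt ((1 - ρ) / (1 + ρ)) * stdQuantile u)

open Filter Topology

lemma stdPdf_eq (x : ℝ) : stdPdf x = (√(2 * π))⁻¹ * exp (-(1 / 2) * x ^ 2) := by
  rw [stdPdf, one_div]
  ring_nf

lemma continuous_stdPdf : Continuous stdPdf := by
  unfold stdPdf
  fun_prop

lemma stdPdf_nonneg (x : ℝ) : 0 ≤ stdPdf x := by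
  unfold stdPdf
  positivity

lemma stdPdf_le_one (x : ℝ) : stdPdf x ≤ 1 := by
  have h2π : 1 ≤ √(2 * π) := Real.one_le_sqrt.2 (by linarith [pi_gt_three])
  rw [stdPdf_eq]
  exact mul_le_one₀ (inv_le_one_of_one_le₀ h2π) (exp_nonneg _)
    (exp_le_one_iff.2 (by nlinarith [sq_nonneg x]))

lemma integrable_stdPdf : Integrable stdPdf := by
  rw [show stdPdf = _ from funext stdPdf_eq]
  exact (integrable_exp_neg_mul_sq (by norm_num)).const_mul _

lemma integrable_mul_stdPdf : Integrable fun x => x * stdPdf x := by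
  simp_rw [stdPdf_eq, mul_left_comm _ (√(2 * π))⁻¹]
  exact (integrable_mul_exp_neg_mul_sq (by norm_num)).const_mul _

lemma integral_stdPdf : ∫ x, stdPdf x = 1 := by
  simp_rw [stdPdf_eq]
  rw [integral_const_mul, integral_gaussian, div_div_eq_mul_div, div_one, mul_comm π 2]
  exact inv_mul_cancel₀ (Real.sqrt_pos.2 (by positivity)).ne'

lemma hasDerivAt_stdCdf (h : ℝ) : HasDerivAt stdCdf (stdPdf h) h := by
  have hΦ : ∀ u, stdCdf u = stdCdf 0 + ∫ t in (0 : ℝ)..u, stdPdf t := fun u => by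
    have := intervalIntegral.integral_Iic_sub_Iic (integrable_stdPdf.integrableOn (s := Iic 0))
      (integrable_stdPdf.integrableOn (s := Iic u))
    simp only [stdCdf, ← integral_Iic_eq_integral_Iio] at this ⊢
    linarith
  refine HasDerivAt.congr_of_eventuallyEq ?_ (Eventually.of_forall hΦ)
  exact (intervalIntegral.integral_hasDerivAt_right integrable_stdPdf.intervalIntegrable
    (continuous_stdPdf.stronglyMeasurableAtFilter _ _) continuous_stdPdf.continuousAt).const_add _

lemma continuous_stdCdf : Continuous stdCdf :=
  continuous_iff_continuousAt.2 fun h => (hasDerivAt_stdCdf h).continuousAt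

lemma stdCdf_nonneg (h : ℝ) : 0 ≤ stdCdf h :=
  setIntegral_nonneg measurableSet_Iio fun x _ => stdPdf_nonneg x

lemma stdCdf_le_one (h : ℝ) : stdCdf h ≤ 1 :=
  integral_stdPdf ▸ setIntegral_le_integral integrable_stdPdf (Eventually.of_forall stdPdf_nonneg)

lemma setIntegral_Iio_comp_sub_div {E : Type*} [NormedAddCommGroup E] [NormedSpace ℝ E]
    (g : ℝ → E) (k c : ℝ) {σ : ℝ} (hσ : 0 < σ) :
    ∫ t in Iio k, σ⁻¹ • g ((t - c) / σ) = ∫ u in Iio ((k - c) / σ), g u := by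
  have hderiv : ∀ t ∈ Iio k, HasDerivWithinAt (fun t => (t - c) / σ) σ⁻¹ (Iio k) t :=
    fun t _ => by
      simpa [one_div] using (((hasDerivAt_id t).sub_const c).div_const σ).hasDerivWithinAt
  have hinj : InjOn (fun t => (t - c) / σ) (Iio k) := fun a _ b _ hab => by
    simpa [div_left_inj' hσ.ne'] using hab
  have himage : (fun t => (t - c) / σ) '' Iio k = Iio ((k - c) / σ) := by
    ext u
    simp only [mem_image, mem_Iio]
    refine ⟨fun ⟨t, ht, htu⟩ => htu ▸ by gcongr,
      fun hu => ⟨u * σ + c, ?_, by field_simp; ring⟩⟩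
    linarith [(lt_div_iff₀ hσ).1 hu]
  rw [← himage, integral_image_eq_integral_abs_deriv_smul measurableSet_Iio hderiv hinj,
    abs_of_pos (inv_pos.2 hσ)]

lemma one_sub_sq_pos_of_mem_Ioo {r : ℝ} (hr : r ∈ Ioo (-1 : ℝ) 1) : 0 < 1 - r ^ 2 := by
  nlinarith [hr.1, hr.2]

lemma binPdf_eq_stdPdf_mul (x t : ℝ) {r : ℝ} (hr : r ∈ Ioo (-1 : ℝ) 1) :
    binPdf x t r = stdPdf x * ((√(1 - r ^ 2))⁻¹ * stdPdf ((t - r * x) / √(1 - r ^ 2))) := by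
  have hσ2 : √(1 - r ^ 2) ^ 2 = 1 - r ^ 2 := sq_sqrt (one_sub_sq_pos_of_mem_Ioo hr).le
  have hσ : √(1 - r ^ 2) ≠ 0 := (sqrt_pos.2 (one_sub_sq_pos_of_mem_Ioo hr)).ne'
  have hexp : -x ^ 2 / 2 + -((t - r * x) / √(1 - r ^ 2)) ^ 2 / 2
      = -(x ^ 2 - 2 * r * x * t + t ^ 2) / (2 * (1 - r ^ 2)) := by
    rw [div_pow, hσ2]
    field_simp [(one_sub_sq_pos_of_mem_Ioo hr).ne']
    ring
  rw [binPdf, stdPdf, stdPdf, ← hexp, exp_add]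
  field_simp
  exact sq_sqrt (by positivity)

lemma integral_Iio_binPdf_snd (x k : ℝ) {r : ℝ} (hr : r ∈ Ioo (-1 : ℝ) 1) :
    ∫ t in Iio k, binPdf x t r = stdPdf x * stdCdf ((k - r * x) / √(1 - r ^ 2)) := by
  simp_rw [binPdf_eq_stdPdf_mul x _ hr]
  rw [integral_const_mul, stdCdf,
    ← setIntegral_Iio_comp_sub_div _ _ _ (sqrt_pos.2 (one_sub_sq_pos_of_mem_Ioo hr))]
  simp only [smul_eq_mul]

lemma binCdf_eq_integral (h k : ℝ) {r : ℝ} (hr : r ∈ Ioo (-1 : ℝ) 1) :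
    binCdf h k r = ∫ s in Iio h, stdPdf s * stdCdf ((k - r * s) / √(1 - r ^ 2)) :=
  setIntegral_congr_fun measurableSet_Iio fun s _ => integral_Iio_binPdf_snd s k hr

lemma hasDerivAt_binPdf_fst (y r s : ℝ) :
    HasDerivAt (fun s => binPdf s y r) (binPdf s y r * ((r * y - s) / (1 - r ^ 2))) s := by
  have hq : HasDerivAt (fun s => -(s ^ 2 - 2 * r * s * y + y ^ 2) / (2 * (1 - r ^ 2)))
      ((r * y - s) / (1 - r ^ 2)) s := by
    refine ((((hasDerivAt_pow 2 s).sub (((hasDerivAt_id s).const_mul (2 * r)).mul_const y))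
      |>.add_const (y ^ 2)).neg.div_const (2 * (1 - r ^ 2))).congr_deriv ?_
    rw [← mul_div_mul_left (r * y - s) (1 - r ^ 2) two_ne_zero]
    push_cast
    ring
  unfold binPdf
  exact (hq.exp.const_mul _).congr_deriv (by ring)

lemma tendsto_binPdf_atBot (y : ℝ) {r : ℝ} (hr : r ∈ Ioo (-1 : ℝ) 1) :
    Tendsto (fun s => binPdf s y r) atBot (𝓝 0) := by
  have hlin : Tendsto (fun s => s - r * y) atBot atBot :=
    tendsto_atBot_add_const_right _ _ tendsto_id
  have hquad : Tendsto (fun s => s ^ 2 - 2 * r * s * y + y ^ 2) atBot atTop := by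
    refine tendsto_atTop_mono (fun s => ?_) (hlin.atBot_mul_atBot₀ hlin)
    nlinarith [mul_nonneg (one_sub_sq_pos_of_mem_Ioo hr).le (sq_nonneg y)]
  have hexponent : Tendsto (fun s => -(s ^ 2 - 2 * r * s * y + y ^ 2) / (2 * (1 - r ^ 2)))
      atBot atBot := by
    simp_rw [neg_div]
    exact tendsto_neg_atTop_atBot.comp
      (hquad.atTop_div_const (by linarith [one_sub_sq_pos_of_mem_Ioo hr]))
  simpa [binPdf] using (tendsto_exp_atBot.comp hexponent).const_mul (1 / (2 * π * √(1 - r ^ 2)))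

lemma hasDerivAt_stdPdf_mul_stdCdf (y s : ℝ) {r : ℝ} (hr : r ∈ Ioo (-1 : ℝ) 1) :
    HasDerivAt (fun r => stdPdf s * stdCdf ((y - r * s) / √(1 - r ^ 2)))
      (binPdf s y r * ((r * y - s) / (1 - r ^ 2))) r := by
  have hpos := one_sub_sq_pos_of_mem_Ioo hr
  have hσ : 0 < √(1 - r ^ 2) := sqrt_pos.2 hpos
  have hσ2 : √(1 - r ^ 2) ^ 2 = 1 - r ^ 2 := sq_sqrt hpos.le
  have hsqrt : HasDerivAt (fun r => √(1 - r ^ 2)) (-r / √(1 - r ^ 2)) r := by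
    refine ((hasDerivAt_pow 2 r).const_sub 1).sqrt hpos.ne' |>.congr_deriv ?_
    field_simp
    push_cast
    ring
  have harg : HasDerivAt (fun r => (y - r * s) / √(1 - r ^ 2))
      ((r * y - s) / √(1 - r ^ 2) ^ 3) r := by
    refine ((hasDerivAt_mul_const s).const_sub y).div hsqrt hσ.ne' |>.congr_deriv ?_
    field_simp
    linear_combination (-s) * hσ2
  refine ((hasDerivAt_stdCdf _).comp r harg).const_mul (stdPdf s) |>.congr_deriv ?_
  rw [binPdf_eq_stdPdf_mul s y hr]
  field_simp
  rw [hσ2]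

lemma norm_binPdf_mul_le {a : ℝ} (ha : a < 1) (y s : ℝ) {r : ℝ} (hr : |r| ≤ a) :
    ‖binPdf s y r * ((r * y - s) / (1 - r ^ 2))‖ ≤
      (|y| + |s|) * stdPdf s / √(1 - a ^ 2) ^ 3 := by
  have hr' : r ∈ Ioo (-1 : ℝ) 1 := abs_lt.1 (hr.trans_lt ha)
  have hc : 0 < √(1 - a ^ 2) := sqrt_pos.2 (by nlinarith [abs_nonneg r])
  have hcσ : √(1 - a ^ 2) ≤ √(1 - r ^ 2) :=
    sqrt_le_sqrt (by nlinarith [sq_abs r, abs_nonneg r])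
  have hnum : |r * y - s| ≤ |y| + |s| := by
    calc |r * y - s| ≤ |r| * |y| + |s| := (abs_sub _ _).trans_eq (by rw [abs_mul])
      _ ≤ 1 * |y| + |s| := by gcongr; exact hr.trans ha.le
      _ = |y| + |s| := by rw [one_mul]
  have hσ2 : √(1 - r ^ 2) ^ 2 = 1 - r ^ 2 := sq_sqrt (one_sub_sq_pos_of_mem_Ioo hr').le
  rw [binPdf_eq_stdPdf_mul s y hr']
  set σ := √(1 - r ^ 2)
  have hσ : 0 < σ := hc.trans_le hcσ
  rw [← hσ2]
  calc ‖stdPdf s * (σ⁻¹ * stdPdf ((y - r * s) / σ)) * ((r * y - s) / σ ^ 2)‖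
      = stdPdf s * stdPdf ((y - r * s) / σ) * |r * y - s| / σ ^ 3 := by
        rw [Real.norm_eq_abs, abs_mul, abs_mul, abs_mul, abs_div, abs_inv, abs_of_pos hσ,
          abs_of_nonneg (stdPdf_nonneg _), abs_of_nonneg (stdPdf_nonneg _),
          abs_of_pos (by positivity : 0 < σ ^ 2)]
        field_simp
    _ ≤ stdPdf s * 1 * (|y| + |s|) / √(1 - a ^ 2) ^ 3 := by
        have := stdPdf_nonneg s
        have := stdPdf_nonneg ((y - r * s) / σ)
        gcongr
        exact stdPdf_le_one _
    _ = (|y| + |s|) * stdPdf s / √(1 - a ^ 2) ^ 3 := by ring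

lemma integrable_add_abs_mul_stdPdf (y : ℝ) : Integrable fun s => (|y| + |s|) * stdPdf s := by
  refine ((integrable_stdPdf.const_mul |y|).add integrable_mul_stdPdf.norm).congr
    (Eventually.of_forall fun s => ?_)
  simp only [Pi.add_apply, Real.norm_eq_abs, abs_mul, abs_of_nonneg (stdPdf_nonneg s)]
  ring

lemma integrable_binPdf_mul (y : ℝ) {r : ℝ} (hr : r ∈ Ioo (-1 : ℝ) 1) :
    Integrable fun s => binPdf s y r * ((r * y - s) / (1 - r ^ 2)) := by
  have hcont : Continuous fun s => binPdf s y r * ((r * y - s) / (1 - r ^ 2)) :=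
    (continuous_iff_continuousAt.2 fun s => (hasDerivAt_binPdf_fst y r s).continuousAt).mul
      (by fun_prop)
  refine ((integrable_add_abs_mul_stdPdf y).div_const _).mono' hcont.aestronglyMeasurable
    (Eventually.of_forall fun s => norm_binPdf_mul_le ?_ y s le_rfl)
  exact abs_lt.2 hr

lemma integral_Iio_binPdf_mul (x y : ℝ) {r : ℝ} (hr : r ∈ Ioo (-1 : ℝ) 1) :
    ∫ s in Iio x, binPdf s y r * ((r * y - s) / (1 - r ^ 2)) = binPdf x y r := by
  rw [← integral_Iic_eq_integral_Iio, integral_Iic_of_hasDerivAt_of_tendsto'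
    (fun s _ => hasDerivAt_binPdf_fst y r s) (integrable_binPdf_mul y hr).integrableOn
    (tendsto_binPdf_atBot y hr), sub_zero]

lemma hasDerivAt_integral_stdPdf_mul_stdCdf (x y : ℝ) {ρ : ℝ} (hρ : ρ ∈ Ioo (-1 : ℝ) 1) :
    HasDerivAt (fun r => ∫ s in Iio x, stdPdf s * stdCdf ((y - r * s) / √(1 - r ^ 2)))
      (∫ s in Iio x, binPdf s y ρ * ((ρ * y - s) / (1 - ρ ^ 2))) ρ := by
  obtain ⟨a, hρa, ha⟩ := exists_between (abs_lt.2 hρ)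
  have hnhds : Icc (-a) a ∈ 𝓝 ρ := Icc_mem_nhds (abs_lt.1 hρa).1 (abs_lt.1 hρa).2
  have hmeas : ∀ r, AEStronglyMeasurable
      (fun s => stdPdf s * stdCdf ((y - r * s) / √(1 - r ^ 2))) (volume.restrict (Iio x)) :=
    fun r => (continuous_stdPdf.mul (continuous_stdCdf.comp (by fun_prop))).aestronglyMeasurable
  have hint :
      IntegrableOn (fun s => stdPdf s * stdCdf ((y - ρ * s) / √(1 - ρ ^ 2))) (Iio x) := by
    refine integrable_stdPdf.integrableOn.mono' (hmeas ρ) (ae_of_all _ fun s => ?_)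
    rw [Real.norm_eq_abs, abs_of_nonneg (mul_nonneg (stdPdf_nonneg s) (stdCdf_nonneg _))]
    exact mul_le_of_le_one_right (stdPdf_nonneg s) (stdCdf_le_one _)
  exact (hasDerivAt_integral_of_dominated_loc_of_deriv_le hnhds (Eventually.of_forall hmeas) hint
    (integrable_binPdf_mul y hρ).integrableOn.aestronglyMeasurable
    (ae_of_all _ fun s r hr => norm_binPdf_mul_le ha y s (abs_le.2 hr))
    ((integrable_add_abs_mul_stdPdf y).div_const _).integrableOn
    (ae_of_all _ fun s r hr => hasDerivAt_stdPdf_mul_stdCdf y s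
      (abs_lt.1 ((abs_le.2 hr).trans_lt ha)))).2

theorem plackett_identity (x y ρ : ℝ) (hρ : ρ ∈ Set.Ioo (-1 : ℝ) 1) :
    HasDerivAt (fun r : ℝ => binCdf x y r) (binPdf x y ρ) ρ := by
  have hderiv := hasDerivAt_integral_stdPdf_mul_stdCdf x y hρ
  rw [integral_Iio_binPdf_mul x y hρ] at hderiv
  refine hderiv.congr_of_eventuallyEq ?_
  filter_upwards [Ioo_mem_nhds hρ.1 hρ.2] with r hr using binCdf_eq_integral x y hr
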